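/- Fix ε ≥ 0 and define g(x) = Φ(x/2 − ε/x) − e^ε Φ(−x/2 − ε/x) for x > 0. Then g(x) → 0 as x → 0⁺ and g(x) → 1 as x → ∞; consequently, for every δ ∈ (0,1) there exists a unique B > 0 with g(B) = δ. -/

import Mathlib

open MeasureTheory ProbabilityTheory Filter

noncomputable def frob {m n : ℕ} (M : Matrix (Fin m) (Fin n) ℝ) : ℝ :=
  Real.sqrt (∑ i, ∑ j, (M i j)^2)

noncomputable def sv {m n : ℕ} (M : Matrix (Fin m) (Fin n) ℝ) : Fin n → ℝ :=
  fun i => Real.sqrt ((show (M.transpose * M).IsHermitian by simpa using Matrix.isHermitian_conjTranspose_mul_self M).eigenvalues i)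

/-- `σ` is the non-increasingly ordered tuple of singular values of `M`. -/
def IsSVals {m n : ℕ} (M : Matrix (Fin m) (Fin n) ℝ) (σ : Fin n → ℝ) : Prop :=
  Antitone σ ∧ ∃ e : Equiv.Perm (Fin n), σ = sv M ∘ e

/-- Standard normal CDF. -/
noncomputable def Phi (t : ℝ) : ℝ :=
  (Real.sqrt (2 * Real.pi))⁻¹ * ∫ u in Set.Iic t, Real.exp (-u^2/2)

/-!
The derivative of `g` at `x > 0` is `Φ'(x/2 - ε/x) > 0`: the two Gaussian density terms combine
because `e^ε φ(-x/2 - ε/x) = φ(x/2 - ε/x)`. Hence `g` is strictly increasing and continuous on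
`(0, ∞)`. As `x → ∞` the arguments of the two `Φ`s tend to `+∞` and `-∞`, so `g → 1`; as `x → 0⁺`
both arguments tend to `-∞` when `ε > 0` (and to `0` when `ε = 0`), so `g → 0`. The intermediate
value theorem then produces `B`.
-/

open Set Topology

section IntegralIic

variable {f : ℝ → ℝ}

theorem tendsto_setIntegral_Iic_atTop (hf : Integrable f) :
    Tendsto (fun t => ∫ u in Iic t, f u) atTop (𝓝 (∫ u, f u)) :=
  (aecover_Iic tendsto_id).integral_tendsto_of_countably_generated hf

theorem tendsto_setIntegral_Iic_atBot (hf : Integrable f) :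
    Tendsto (fun t => ∫ u in Iic t, f u) atBot (𝓝 0) := by
  have hIoi : Tendsto (fun t => ∫ u in Ioi t, f u) atBot (𝓝 (∫ u, f u)) :=
    (aecover_Ioi tendsto_id).integral_tendsto_of_countably_generated hf
  have hsplit : ∀ t, ∫ u in Iic t, f u = (∫ u, f u) - ∫ u in Ioi t, f u := fun t => by
    rw [← intervalIntegral.integral_Iic_add_Ioi hf.integrableOn hf.integrableOn (b := t)]
    ring
  simpa [hsplit] using (tendsto_const_nhds (x := ∫ u, f u)).sub hIoi

theorem hasDerivAt_setIntegral_Iic (hf : Integrable f) (hc : Continuous f) (t : ℝ) :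
    HasDerivAt (fun s => ∫ u in Iic s, f u) (f t) t := by
  have hsplit : (fun s => ∫ u in Iic s, f u) = fun s => (∫ u in Iic 0, f u) + ∫ u in 0..s, f u := by
    funext s
    rw [← intervalIntegral.integral_Iic_sub_Iic hf.integrableOn hf.integrableOn]
    ring
  rw [hsplit]
  exact (intervalIntegral.integral_hasDerivAt_right hf.intervalIntegrable
    (hc.stronglyMeasurableAtFilter _ _) hc.continuousAt).const_add _

end IntegralIic

section StandardNormal

theorem integrable_exp_neg_sq_div_two : Integrable fun u : ℝ => Real.exp (-u ^ 2 / 2) := by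
  simpa [neg_div, div_eq_inv_mul] using integrable_exp_neg_mul_sq (b := 1 / 2) (by norm_num)

theorem integral_exp_neg_sq_div_two : ∫ u : ℝ, Real.exp (-u ^ 2 / 2) = Real.sqrt (2 * Real.pi) := by
  have := integral_gaussian (1 / 2)
  simp only [div_eq_inv_mul, inv_inv, mul_one] at this ⊢
  simpa [mul_comm] using this

theorem tendsto_Phi_atTop : Tendsto Phi atTop (𝓝 1) := by
  have h := (tendsto_setIntegral_Iic_atTop integrable_exp_neg_sq_div_two).const_mul
    (Real.sqrt (2 * Real.pi))⁻¹
  rwa [integral_exp_neg_sq_div_two, inv_mul_cancel₀ (by positivity)] at h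

theorem tendsto_Phi_atBot : Tendsto Phi atBot (𝓝 0) := by
  have h := (tendsto_setIntegral_Iic_atBot integrable_exp_neg_sq_div_two).const_mul
    (Real.sqrt (2 * Real.pi))⁻¹
  rwa [mul_zero] at h

theorem hasDerivAt_Phi (t : ℝ) :
    HasDerivAt Phi ((Real.sqrt (2 * Real.pi))⁻¹ * Real.exp (-t ^ 2 / 2)) t :=
  (hasDerivAt_setIntegral_Iic integrable_exp_neg_sq_div_two (by fun_prop) t).const_mul _

@[fun_prop]
theorem continuous_Phi : Continuous Phi :=
  continuous_iff_continuousAt.2 fun t => (hasDerivAt_Phi t).continuousAt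

end StandardNormal

section ExistsUnique

variable {α β : Type*} [ConditionallyCompleteLinearOrder α] [TopologicalSpace α] [OrderTopology α]
  [DenselyOrdered α] [NoMaxOrder α] [LinearOrder β] [TopologicalSpace β] [OrderTopology β]

theorem existsUnique_eq_of_strictMonoOn_Ioi {f : α → β} {a : α} {l u δ : β}
    (hf : StrictMonoOn f (Ioi a)) (hc : ContinuousOn f (Ioi a)) (hl : Tendsto f (𝓝[>] a) (𝓝 l))
    (hu : Tendsto f atTop (𝓝 u)) (hδ : δ ∈ Ioo l u) : ∃! x, a < x ∧ f x = δ := by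
  obtain ⟨x₁, hx₁δ, hax₁⟩ :=
    ((hl.eventually_lt_const hδ.1).and self_mem_nhdsWithin).exists
  obtain ⟨x₂, hx₂δ, hx₁₂⟩ := ((hu.eventually_const_lt hδ.2).and (eventually_ge_atTop x₁)).exists
  have hsub : Icc x₁ x₂ ⊆ Ioi a := fun x hx => lt_of_lt_of_le hax₁ hx.1
  obtain ⟨x, hx, hfx⟩ := intermediate_value_Icc hx₁₂ (hc.mono hsub) ⟨hx₁δ.le, hx₂δ.le⟩
  exact ⟨x, ⟨hsub hx, hfx⟩, fun y hy => hf.injOn hy.1 (hsub hx) (hy.2.trans hfx.symm)⟩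

end ExistsUnique

section GaussianPrivacyProfile

-- `gdpDelta ε μ` is the `δ` for which `μ`-Gaussian differential privacy implies `(ε, δ)`-DP.
noncomputable def gdpDelta (ε μ : ℝ) : ℝ :=
  Phi (μ / 2 - ε / μ) - Real.exp ε * Phi (-μ / 2 - ε / μ)

-- `(x/2 + ε/x)² = (x/2 - ε/x)² + 2ε`
theorem exp_mul_exp_neg_sq_div_two_eq (ε : ℝ) {x : ℝ} (hx : x ≠ 0) :
    Real.exp ε * Real.exp (-(-x / 2 - ε / x) ^ 2 / 2) = Real.exp (-(x / 2 - ε / x) ^ 2 / 2) := by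
  rw [← Real.exp_add]
  congr 1
  field_simp
  ring

theorem hasDerivAt_gdpDelta (ε : ℝ) {x : ℝ} (hx : x ≠ 0) :
    HasDerivAt (gdpDelta ε)
      ((Real.sqrt (2 * Real.pi))⁻¹ * Real.exp (-(x / 2 - ε / x) ^ 2 / 2)) x := by
  have hinv : HasDerivAt (fun y => ε / y) (-(ε / x ^ 2)) x := by
    simpa [div_eq_mul_inv] using (hasDerivAt_inv hx).const_mul ε
  have hhalf : HasDerivAt (fun y : ℝ => y / 2) (1 / 2) x := by
    simpa using (hasDerivAt_id x).div_const 2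
  have hneghalf : HasDerivAt (fun y : ℝ => -y / 2) (-1 / 2) x := by
    simpa using (hasDerivAt_neg x).div_const 2
  have ha := (hasDerivAt_Phi (x / 2 - ε / x)).comp x (hhalf.sub hinv)
  have hb := ((hasDerivAt_Phi (-x / 2 - ε / x)).comp x (hneghalf.sub hinv)).const_mul (Real.exp ε)
  refine (ha.sub hb).congr_deriv ?_
  linear_combination (-((Real.sqrt (2 * Real.pi))⁻¹ * (-1 / 2 + ε / x ^ 2))) *
    exp_mul_exp_neg_sq_div_two_eq ε hx

theorem continuousOn_gdpDelta (ε : ℝ) : ContinuousOn (gdpDelta ε) (Ioi 0) :=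
  fun _ hx => (hasDerivAt_gdpDelta ε (hx.ne')).continuousAt.continuousWithinAt

theorem strictMonoOn_gdpDelta (ε : ℝ) : StrictMonoOn (gdpDelta ε) (Ioi 0) := by
  refine strictMonoOn_of_hasDerivWithinAt_pos (convex_Ioi 0) (continuousOn_gdpDelta ε)
    (fun x hx => (hasDerivAt_gdpDelta ε ?_).hasDerivWithinAt) (fun x _ => by positivity)
  rw [interior_Ioi] at hx
  exact hx.ne'

theorem tendsto_gdpDelta_atTop (ε : ℝ) : Tendsto (gdpDelta ε) atTop (𝓝 1) := by
  unfold gdpDelta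
  have hdiv : Tendsto (fun x => -(ε / x)) atTop (𝓝 0) := by
    simpa using (tendsto_const_nhds (x := ε)).div_atTop tendsto_id |>.neg
  have hhalf : Tendsto (fun x : ℝ => x / 2) atTop atTop := tendsto_id.atTop_div_const two_pos
  have hA : Tendsto (fun x => x / 2 - ε / x) atTop atTop := by
    simpa only [sub_eq_add_neg] using hhalf.atTop_add hdiv
  have hB : Tendsto (fun x => -x / 2 - ε / x) atTop atBot := by
    simpa only [sub_eq_add_neg, neg_div, Function.comp_def] using
      (tendsto_neg_atTop_atBot.comp hhalf).atBot_add hdiv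
  simpa using (tendsto_Phi_atTop.comp hA).sub ((tendsto_Phi_atBot.comp hB).const_mul (Real.exp ε))

theorem tendsto_gdpDelta_nhdsGT_zero {ε : ℝ} (hε : 0 ≤ ε) :
    Tendsto (gdpDelta ε) (𝓝[>] 0) (𝓝 0) := by
  unfold gdpDelta
  rcases hε.eq_or_lt with rfl | hε
  · have hc : Continuous fun x : ℝ => Phi (x / 2) - Phi (-x / 2) := by fun_prop
    simpa using (hc.tendsto 0).mono_left (nhdsWithin_le_nhds (s := Ioi 0))
  have hbot : ∀ h : ℝ → ℝ, Tendsto h (𝓝[>] 0) (𝓝 0) →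
      Tendsto (fun x => h x - ε / x) (𝓝[>] 0) atBot := fun h hh => by
    simpa only [sub_eq_add_neg, div_eq_mul_inv, Function.comp_def] using
      hh.add_atBot (tendsto_neg_atTop_atBot.comp (tendsto_inv_nhdsGT_zero.const_mul_atTop hε))
  have hhalf : Tendsto (fun x : ℝ => x / 2) (𝓝[>] 0) (𝓝 0) := by
    simpa using (tendsto_id.div_const 2).mono_left (nhdsWithin_le_nhds (a := (0 : ℝ)))
  have hneghalf : Tendsto (fun x : ℝ => -x / 2) (𝓝[>] 0) (𝓝 0) := by
    simpa [neg_div] using hhalf.neg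
  simpa using (tendsto_Phi_atBot.comp (hbot _ hhalf)).sub
    ((tendsto_Phi_atBot.comp (hbot _ hneghalf)).const_mul (Real.exp ε))

end GaussianPrivacyProfile

theorem stmt8 (ε : ℝ) (hε : 0 ≤ ε) :
    Tendsto (fun x : ℝ => Phi (x/2 - ε/x) - Real.exp ε * Phi (-x/2 - ε/x))
      (nhdsWithin 0 (Set.Ioi 0)) (nhds 0) ∧
    Tendsto (fun x : ℝ => Phi (x/2 - ε/x) - Real.exp ε * Phi (-x/2 - ε/x))
      atTop (nhds 1) ∧
    ∀ δ : ℝ, δ ∈ Set.Ioo (0:ℝ) 1 →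
      ∃! B : ℝ, 0 < B ∧ Phi (B/2 - ε/B) - Real.exp ε * Phi (-B/2 - ε/B) = δ :=
  ⟨tendsto_gdpDelta_nhdsGT_zero hε, tendsto_gdpDelta_atTop ε, fun _ hδ =>
    existsUnique_eq_of_strictMonoOn_Ioi (strictMonoOn_gdpDelta ε) (continuousOn_gdpDelta ε)
      (tendsto_gdpDelta_nhdsGT_zero hε) (tendsto_gdpDelta_atTop ε) hδ⟩
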